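/- Let X be a uniquely arcwise connected continuum and let Y ⊆ X be either a tree, or the image of an oscillatory ray, or the image of a bi-sided-oscillatory line in X. Then for every x ∈ X there is a unique point y ∈ Y such that [x, y] ∩ Y = {y} (where for x ∈ Y one takes y = x); hence the quasi-retraction r_Y : X → Y, x ↦ y, is well defined. -/

import Mathlib

/-- `A` is an arc in `X` joining `x` and `y`: the image of a continuous injection
from `[0,1]` sending `0` to `x` and `1` to `y`. -/
def IsArcBetween {X : Type*} [TopologicalSpace X] (A : Set X) (x y : X) : Prop :=
  ∃ f : unitInterval → X, Continuous f ∧ Function.Injective f ∧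
    f 0 = x ∧ f 1 = y ∧ Set.range f = A

/-- `A` is an arc in `X` (a subspace homeomorphic to `[0,1]`). -/
def IsArc {X : Type*} [TopologicalSpace X] (A : Set X) : Prop :=
  ∃ x y, IsArcBetween A x y

/-- `X` is uniquely arcwise connected: any two distinct points are joined by a unique arc. -/
def UniquelyArcwiseConnected (X : Type*) [TopologicalSpace X] : Prop :=
  ∀ x y : X, x ≠ y → ∃! A : Set X, IsArcBetween A x y

/-- A dendrite: a (metrizable) continuum which is locally connected and uniquely
arcwise connected. -/
def IsDendrite (X : Type*) [TopologicalSpace X] : Prop :=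
  Nonempty X ∧ CompactSpace X ∧ ConnectedSpace X ∧
    TopologicalSpace.MetrizableSpace X ∧ LocallyConnectedSpace X ∧
    UniquelyArcwiseConnected X

/-- A subset `Y` of `X` is a tree: it is a dendrite (with the subspace topology)
which is the union of finitely many arcs. -/
def IsTree {X : Type*} [TopologicalSpace X] (Y : Set X) : Prop :=
  IsDendrite Y ∧ ∃ (n : ℕ) (A : Fin n → Set X), (∀ i, IsArc (A i)) ∧ Y = ⋃ i, A i

/-- `Y` is the image of an oscillatory ray: a continuous injection `φ : [0, ∞) → X`
with image `Y` such that `⋂ n closure (φ [n, ∞))` contains at least two points. -/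
def IsOscillatoryRaySet {X : Type*} [TopologicalSpace X] (Y : Set X) : Prop :=
  ∃ φ : ℝ → X, ContinuousOn φ (Set.Ici 0) ∧ Set.InjOn φ (Set.Ici 0) ∧
    φ '' Set.Ici 0 = Y ∧
    ∃ u v : X, u ≠ v ∧
      ∀ n : ℕ, u ∈ closure (φ '' Set.Ici (n : ℝ)) ∧ v ∈ closure (φ '' Set.Ici (n : ℝ))

/-- `Y` is the image of a bi-sided-oscillatory line: a continuous injection
`ψ : (−∞, ∞) → X` with image `Y` such that both `⋂ n closure (ψ (−∞, −n])` and
`⋂ n closure (ψ [n, ∞))` contain at least two points. -/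
def IsBiOscillatoryLineSet {X : Type*} [TopologicalSpace X] (Y : Set X) : Prop :=
  ∃ ψ : ℝ → X, Continuous ψ ∧ Function.Injective ψ ∧ Set.range ψ = Y ∧
    (∃ u v : X, u ≠ v ∧
      ∀ n : ℕ, u ∈ closure (ψ '' Set.Iic (-(n : ℝ))) ∧
        v ∈ closure (ψ '' Set.Iic (-(n : ℝ)))) ∧
    (∃ u v : X, u ≠ v ∧
      ∀ n : ℕ, u ∈ closure (ψ '' Set.Ici (n : ℝ)) ∧ v ∈ closure (ψ '' Set.Ici (n : ℝ)))

/-- `y` is the quasi-retraction of `x` to `Y`: `y ∈ Y`, and either `x = y` (the case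
`x ∈ Y`), or the arc `[x, y]` meets `Y` exactly in `{y}`. -/
def QuasiRetractPt {X : Type*} [TopologicalSpace X] (Y : Set X) (x y : X) : Prop :=
  y ∈ Y ∧ (x = y ∨ ∃ A : Set X, IsArcBetween A x y ∧ A ∩ Y = {y})

/-!
For existence, take the arc from `x` to a point of `Y`: the parameters at which it lies in `Y`
form a closed set, so there is a first one. For a tree this holds because `Y` is compact. For a
ray, if a limit parameter `c` were missed, the arc would meet the ray near `c` at arbitrarily
late times; by uniqueness of arcs, the piece of the ray between two such times is a piece of our
arc near `c`, so a whole tail of the ray stays close to the point of parameter `c`, against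
oscillation. A line is the union of two rays.

For uniqueness, if `y₁ ≠ y₂` both qualify, follow `[y₁, x]` to its last point `p` on `[x, y₂]`
and then `[x, y₂]` to `y₂`: this is an arc from `y₁` to `y₂`, hence the arc inside `Y`. So
`p ∈ [x, y₁] ∩ Y = {y₁}`, and then `y₁ ∈ [x, y₂] ∩ Y = {y₂}`.
-/

open Set unitInterval

section Arcs

variable {X : Type*} [TopologicalSpace X] {A B : Set X} {a b p : X}

theorem IsArcBetween.left_mem (h : IsArcBetween A a b) : a ∈ A := by
  obtain ⟨f, -, -, rfl, -, rfl⟩ := h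
  exact mem_range_self 0

theorem IsArcBetween.ne (h : IsArcBetween A a b) : a ≠ b := by
  obtain ⟨f, -, hi, rfl, rfl, -⟩ := h
  exact fun h01 => zero_ne_one (hi h01)

theorem IsArcBetween.isCompact (h : IsArcBetween A a b) : IsCompact A := by
  obtain ⟨f, hc, -, -, -, rfl⟩ := h
  exact isCompact_range hc

theorem IsArcBetween.symm (h : IsArcBetween A a b) : IsArcBetween A b a := by
  obtain ⟨f, hc, hi, rfl, rfl, rfl⟩ := h
  refine ⟨f ∘ σ, hc.comp continuous_symm, hi.comp symm_bijective.injective, by simp, by simp, ?_⟩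
  rw [range_comp, symm_bijective.surjective.range_eq, image_univ]

theorem IsArcBetween.image {Z : Type*} [TopologicalSpace Z] {g : X → Z} (hgc : Continuous g)
    (hgi : Function.Injective g) (h : IsArcBetween A a b) : IsArcBetween (g '' A) (g a) (g b) := by
  obtain ⟨f, hc, hi, rfl, rfl, rfl⟩ := h
  exact ⟨g ∘ f, hgc.comp hc, hgi.comp hi, rfl, rfl, range_comp g f⟩

theorem IsArcBetween.union (hA : IsArcBetween A a p) (hB : IsArcBetween B p b)
    (hAB : A ∩ B = {p}) : IsArcBetween (A ∪ B) a b := by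
  obtain ⟨f, hfc, hfi, rfl, rfl, rfl⟩ := hA
  obtain ⟨g, hgc, hgi, hg0, rfl, rfl⟩ := hB
  let γ : Path (f 0) (g 1) :=
    (⟨⟨f, hfc⟩, rfl, rfl⟩ : Path (f 0) (f 1)).trans ⟨⟨g, hgc⟩, hg0, rfl⟩
  have hf : ∀ s, f s = f 1 → (s : ℝ) = 1 := fun s h => congrArg Subtype.val (hfi h)
  have hg : ∀ s, g s = f 1 → (s : ℝ) = 0 := fun s h => congrArg Subtype.val (hgi (h.trans hg0.symm))
  have hmeet : ∀ s t, f s = g t → f s = f 1 ∧ g t = f 1 := fun s t h => by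
    have : f s ∈ range f ∩ range g := ⟨mem_range_self s, h ▸ mem_range_self t⟩
    rw [hAB, mem_singleton_iff] at this
    exact ⟨this, h ▸ this⟩
  refine ⟨γ, γ.continuous, ?_, γ.source, γ.target, Path.trans_range _ _⟩
  intro s t hst
  simp only [γ, Path.trans_apply, Path.coe_mk_mk] at hst
  split_ifs at hst with hs ht ht
  · exact Subtype.ext (by linarith [congrArg Subtype.val (hfi hst)])
  · have h := hmeet _ _ hst
    linarith [hf _ h.1, hg _ h.2]
  · have h := hmeet _ _ hst.symm
    linarith [hf _ h.1, hg _ h.2]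
  · exact Subtype.ext (by linarith [congrArg Subtype.val (hgi hst)])

theorem isArcBetween_image_Icc {F : ℝ → X} {s t : ℝ} (hst : s < t) (hc : ContinuousOn F (Icc s t))
    (hi : InjOn F (Icc s t)) : IsArcBetween (F '' Icc s t) (F s) (F t) := by
  set e := (iccHomeoI s t hst).symm
  refine ⟨(Icc s t).domRestrict F ∘ e,
    (continuousOn_iff_continuous_domRestrict.1 hc).comp e.continuous,
    hi.injective.comp e.injective, ?_, ?_, ?_⟩
  · simp [e, Set.domRestrict]
  · simp [e, Set.domRestrict]
  · rw [range_comp, e.surjective.range_eq, image_univ, range_domRestrict]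

theorem isArcBetween_image_uIcc {F : ℝ → X} {s t : ℝ} (hst : s ≠ t)
    (hc : ContinuousOn F (uIcc s t)) (hi : InjOn F (uIcc s t)) :
    IsArcBetween (F '' uIcc s t) (F s) (F t) := by
  rcases hst.lt_or_gt with h | h
  · rw [uIcc_of_le h.le] at hc hi ⊢
    exact isArcBetween_image_Icc h hc hi
  · rw [uIcc_of_ge h.le] at hc hi ⊢
    exact (isArcBetween_image_Icc h hc hi).symm

theorem IsArcBetween.exists_real_param (h : IsArcBetween A a b) :
    ∃ F : ℝ → X, Continuous F ∧ InjOn F (Icc 0 1) ∧ F 0 = a ∧ F 1 = b ∧ F '' Icc 0 1 = A := by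
  obtain ⟨f, hc, hi, rfl, rfl, rfl⟩ := h
  refine ⟨IccExtend zero_le_one f, hc.Icc_extend', ?_, IccExtend_val _ _ 0, IccExtend_val _ _ 1, ?_⟩
  · intro s hs t ht hst
    rw [IccExtend_of_mem _ _ hs, IccExtend_of_mem _ _ ht] at hst
    exact congrArg Subtype.val (hi hst)
  · rw [← Subtype.range_coe (s := Icc (0 : ℝ) 1), ← range_comp]
    exact congrArg range (funext (IccExtend_val _ _))

theorem IsArcBetween.exists_subarc (h : IsArcBetween A a b) (hp : p ∈ A) (hpb : p ≠ b) :
    ∃ B ⊆ A, IsArcBetween B p b := by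
  obtain ⟨F, hFc, hFi, -, rfl, rfl⟩ := h.exists_real_param
  obtain ⟨r, hr, rfl⟩ := hp
  have hr1 : r < 1 := hr.2.lt_of_ne (by rintro rfl; exact hpb rfl)
  exact ⟨F '' Icc r 1, image_mono (Icc_subset_Icc_left hr.1),
    isArcBetween_image_Icc hr1 hFc.continuousOn (hFi.mono (Icc_subset_Icc_left hr.1))⟩

theorem UniquelyArcwiseConnected.arc_eq (hX : UniquelyArcwiseConnected X)
    (hA : IsArcBetween A a b) (hB : IsArcBetween B a b) : A = B :=
  (hX a b hA.ne).unique hA hB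

end Arcs

section QuasiRetraction

variable {X : Type*} [TopologicalSpace X]

def IsArcClosed (Y : Set X) : Prop :=
  ∀ F : ℝ → X, Continuous F → InjOn F (Icc 0 1) → IsClosed (Icc 0 1 ∩ F ⁻¹' Y)

def IsArcConnected (Y : Set X) : Prop :=
  ∀ y₁ ∈ Y, ∀ y₂ ∈ Y, y₁ ≠ y₂ → ∃ A ⊆ Y, IsArcBetween A y₁ y₂

variable {Y : Set X} {x y y₁ y₂ : X}

theorem exists_quasiRetractPt (hX : UniquelyArcwiseConnected X) (hne : Y.Nonempty)
    (hY : IsArcClosed Y) (x : X) : ∃ y, QuasiRetractPt Y x y := by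
  by_cases hx : x ∈ Y
  · exact ⟨x, hx, Or.inl rfl⟩
  obtain ⟨y₀, hy₀⟩ := hne
  obtain ⟨A, hA, -⟩ := hX x y₀ (ne_of_mem_of_not_mem hy₀ hx).symm
  obtain ⟨F, hFc, hFi, rfl, rfl, -⟩ := hA.exists_real_param
  obtain ⟨t, ⟨htI, htY⟩, htmin⟩ :=
    (isCompact_Icc.of_isClosed_subset (hY F hFc hFi) inter_subset_left).exists_isLeast
      ⟨1, right_mem_Icc.2 zero_le_one, hy₀⟩
  have ht0 : 0 < t := htI.1.lt_of_ne (by rintro rfl; exact hx htY)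
  refine ⟨F t, htY, Or.inr ⟨F '' Icc 0 t,
    isArcBetween_image_Icc ht0 hFc.continuousOn (hFi.mono (Icc_subset_Icc_right htI.2)), ?_⟩⟩
  refine Subset.antisymm ?_
    (singleton_subset_iff.2 ⟨mem_image_of_mem F (right_mem_Icc.2 ht0.le), htY⟩)
  rintro _ ⟨⟨s, hs, rfl⟩, hsY⟩
  rw [le_antisymm hs.2 (htmin ⟨⟨hs.1, hs.2.trans htI.2⟩, hsY⟩)]
  rfl

theorem QuasiRetractPt.eq_of_mem (h : QuasiRetractPt Y x y) (hx : x ∈ Y) : y = x := by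
  obtain ⟨-, rfl | ⟨A, hA, hAY⟩⟩ := h
  · rfl
  · have : x ∈ A ∩ Y := ⟨hA.left_mem, hx⟩
    rw [hAY] at this
    exact this.symm

theorem eq_of_isArcBetween_inter_eq_singleton [T2Space X] (hX : UniquelyArcwiseConnected X)
    (hY : IsArcConnected Y) {A₁ A₂ : Set X} (hA₁ : IsArcBetween A₁ x y₁)
    (hA₂ : IsArcBetween A₂ x y₂) (hA₁Y : A₁ ∩ Y = {y₁}) (hA₂Y : A₂ ∩ Y = {y₂}) : y₁ = y₂ := by
  have mem_Y : ∀ {A : Set X} {y}, A ∩ Y = {y} → y ∈ Y := fun h => (h.ge rfl).2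
  have eq_of_mem : ∀ {A : Set X} {y q}, A ∩ Y = {y} → q ∈ A → q ∈ Y → q = y :=
    fun h hqA hqY => eq_of_mem_singleton (h ▸ ⟨hqA, hqY⟩)
  by_contra hne
  obtain ⟨F, hFc, hFi, rfl, rfl, rfl⟩ := hA₁.exists_real_param
  obtain ⟨t, ⟨htI, htA₂⟩, htmax⟩ :=
    (isCompact_Icc.inter_right (hA₂.isCompact.isClosed.preimage hFc)).exists_isGreatest
      ⟨0, left_mem_Icc.2 zero_le_one, hA₂.left_mem⟩
  set p := F t
  have hpA₁ : p ∈ F '' Icc 0 1 := mem_image_of_mem F htI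
  have hp₁ : p ≠ F 1 := fun h => hne (eq_of_mem hA₂Y (h ▸ htA₂) (mem_Y hA₁Y))
  have hp₂ : p ≠ y₂ := fun h => hne (eq_of_mem hA₁Y (h ▸ hpA₁) (mem_Y hA₂Y)).symm
  have ht1 : t < 1 := htI.2.lt_of_ne (by rintro rfl; exact hp₁ rfl)
  have hB₁ : IsArcBetween (F '' Icc t 1) p (F 1) :=
    isArcBetween_image_Icc ht1 hFc.continuousOn (hFi.mono (Icc_subset_Icc_left htI.1))
  obtain ⟨B₂, hB₂A₂, hB₂⟩ := hA₂.exists_subarc htA₂ hp₂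
  have hB₁B₂ : F '' Icc t 1 ∩ B₂ = {p} := by
    refine Subset.antisymm ?_ (singleton_subset_iff.2 ⟨hB₁.left_mem, hB₂.left_mem⟩)
    rintro _ ⟨⟨s, hs, rfl⟩, hsB₂⟩
    rw [le_antisymm (htmax ⟨⟨htI.1.trans hs.1, hs.2⟩, hB₂A₂ hsB₂⟩) hs.1]
    rfl
  obtain ⟨A, hAY, hA⟩ := hY _ (mem_Y hA₁Y) _ (mem_Y hA₂Y) hne
  have hpY : p ∈ Y := hAY (hX.arc_eq (hB₁.symm.union hB₂ hB₁B₂) hA ▸ Or.inl hB₁.left_mem)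
  exact hp₁ (eq_of_mem hA₁Y hpA₁ hpY)

theorem QuasiRetractPt.eq [T2Space X] (hX : UniquelyArcwiseConnected X) (hY : IsArcConnected Y)
    (h₁ : QuasiRetractPt Y x y₁) (h₂ : QuasiRetractPt Y x y₂) : y₁ = y₂ := by
  by_cases hx : x ∈ Y
  · rw [h₁.eq_of_mem hx, h₂.eq_of_mem hx]
  obtain ⟨hy₁, rfl | ⟨A₁, hA₁, hA₁Y⟩⟩ := h₁
  · exact absurd hy₁ hx
  obtain ⟨hy₂, rfl | ⟨A₂, hA₂, hA₂Y⟩⟩ := h₂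
  · exact absurd hy₂ hx
  exact eq_of_isArcBetween_inter_eq_singleton hX hY hA₁ hA₂ hA₁Y hA₂Y

theorem existsUnique_quasiRetractPt [T2Space X] (hX : UniquelyArcwiseConnected X)
    (hne : Y.Nonempty) (hY : IsArcClosed Y) (hY' : IsArcConnected Y) (x : X) :
    ∃! y, QuasiRetractPt Y x y :=
  let ⟨y, hy⟩ := exists_quasiRetractPt hX hne hY x
  ⟨y, hy, fun _ h => h.eq hX hY' hy⟩

theorem IsClosed.isArcClosed (hY : IsClosed Y) : IsArcClosed Y :=
  fun _ hFc _ => isClosed_Icc.inter (hY.preimage hFc)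

theorem IsArcClosed.union {Y' : Set X} (hY : IsArcClosed Y) (hY' : IsArcClosed Y') :
    IsArcClosed (Y ∪ Y') := fun F hFc hFi => by
  rw [preimage_union, inter_union_distrib_left]
  exact (hY F hFc hFi).union (hY' F hFc hFi)

theorem isArcConnected_of_uniquelyArcwiseConnected (hY : UniquelyArcwiseConnected Y) :
    IsArcConnected Y := by
  intro y₁ hy₁ y₂ hy₂ hne
  obtain ⟨A, hA, -⟩ := hY ⟨y₁, hy₁⟩ ⟨y₂, hy₂⟩ (fun h => hne (congrArg Subtype.val h))
  exact ⟨_, Subtype.coe_image_subset Y A, hA.image continuous_subtype_val Subtype.val_injective⟩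

theorem isArcConnected_image {F : ℝ → X} {S : Set ℝ} (hS : S.OrdConnected)
    (hFc : ContinuousOn F S) (hFi : InjOn F S) : IsArcConnected (F '' S) := by
  rintro _ ⟨a, ha, rfl⟩ _ ⟨b, hb, rfl⟩ hne
  have hab := hS.uIcc_subset ha hb
  exact ⟨_, image_mono hab,
    isArcBetween_image_uIcc (fun h => hne (h ▸ rfl)) (hFc.mono hab) (hFi.mono hab)⟩

end QuasiRetraction

section Rays

theorem image_Ici_subset_of_unbounded {X : Type*} [TopologicalSpace X]
    (hX : UniquelyArcwiseConnected X) {φ F : ℝ → X} (hφc : ContinuousOn φ (Ici 0))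
    (hφi : InjOn φ (Ici 0)) {S : Set ℝ} (hS : S.OrdConnected) (hFc : ContinuousOn F S)
    (hFi : InjOn F S) (hunb : ∀ B, ∃ s > B, φ s ∈ F '' S) {s₀ : ℝ} (hs₀ : 0 ≤ s₀)
    (h₀ : φ s₀ ∈ F '' S) : φ '' Ici s₀ ⊆ F '' S := by
  rintro _ ⟨s, hs, rfl⟩
  obtain ⟨s₁, hs₁, t₁, ht₁, hFt₁⟩ := hunb s
  obtain ⟨t₀, ht₀, hFt₀⟩ := h₀
  have hs₀₁ : s₀ < s₁ := lt_of_le_of_lt hs hs₁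
  have hsub : Icc s₀ s₁ ⊆ Ici 0 := fun r hr => hs₀.trans hr.1
  have hφarc := isArcBetween_image_Icc hs₀₁ (hφc.mono hsub) (hφi.mono hsub)
  have ht₀₁ : t₀ ≠ t₁ := by
    rintro rfl
    exact hs₀₁.ne (hφi hs₀ (hs₀.trans hs₀₁.le) (hFt₀.symm.trans hFt₁))
  have ht := hS.uIcc_subset ht₀ ht₁
  have hFarc := isArcBetween_image_uIcc ht₀₁ (hFc.mono ht) (hFi.mono ht)
  rw [hFt₀, hFt₁] at hFarc
  exact image_mono ht (hX.arc_eq hφarc hFarc ▸ mem_image_of_mem φ ⟨hs, hs₁.le⟩)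

variable {X : Type*} [MetricSpace X]

theorem not_image_Ici_subset_closedBall {φ : ℝ → X} {u v : X}
    (hosc : ∀ n : ℕ, u ∈ closure (φ '' Ici (n : ℝ)) ∧ v ∈ closure (φ '' Ici (n : ℝ)))
    {ε : ℝ} (hε : 2 * ε < dist u v) (z : X) (s₀ : ℝ) :
    ¬ φ '' Ici s₀ ⊆ Metric.closedBall z ε := by
  intro h
  have hcl := closure_minimal ((image_mono (Ici_subset_Ici.2 (Nat.le_ceil s₀))).trans h)
    Metric.isClosed_closedBall
  have hu := Metric.mem_closedBall.1 (hcl (hosc ⌈s₀⌉₊).1)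
  have hv := Metric.mem_closedBall.1 (hcl (hosc ⌈s₀⌉₊).2)
  linarith [dist_triangle_right u v z]

theorem isArcClosed_image_Ici (hX : UniquelyArcwiseConnected X) {φ : ℝ → X}
    (hφc : ContinuousOn φ (Ici 0)) (hφi : InjOn φ (Ici 0)) {u v : X} (huv : u ≠ v)
    (hosc : ∀ n : ℕ, u ∈ closure (φ '' Ici (n : ℝ)) ∧ v ∈ closure (φ '' Ici (n : ℝ))) :
    IsArcClosed (φ '' Ici 0) := by
  intro F hFc hFi
  rw [← closure_subset_iff_isClosed]
  intro c hc
  refine ⟨closure_minimal inter_subset_left isClosed_Icc hc, ?_⟩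
  by_contra hcY
  obtain ⟨ε, hε, hεuv⟩ : ∃ ε, 0 < ε ∧ 2 * ε < dist u v :=
    ⟨dist u v / 3, by linarith [dist_pos.2 huv], by linarith [dist_pos.2 huv]⟩
  obtain ⟨δ, hδ, hδε⟩ :=
    Metric.mem_nhds_iff.1 (hFc.continuousAt (Metric.ball_mem_nhds (F c) hε))
  set S := Icc 0 1 ∩ Metric.ball c δ
  have hS : S.OrdConnected := ordConnected_Icc.inter (Real.ball_eq_Ioo c δ ▸ ordConnected_Ioo)
  -- `F c` lies off the compact initial segments of the ray, so hits of the ray near `c` come late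
  have hunb : ∀ B, ∃ s > B, φ s ∈ F '' S := by
    intro B
    have hK : IsClosed (φ '' Icc 0 B) :=
      (isCompact_Icc.image_of_continuousOn (hφc.mono Icc_subset_Ici_self)).isClosed
    have hcK : F c ∉ φ '' Icc 0 B := fun ⟨s, hs, h⟩ => hcY ⟨s, hs.1, h⟩
    obtain ⟨t, ⟨htK, htδ⟩, htI, s, hs, hst⟩ := mem_closure_iff_nhds.1 hc _
      (Filter.inter_mem (hFc.continuousAt (hK.isOpen_compl.mem_nhds hcK))
        (Metric.ball_mem_nhds c hδ))
    exact ⟨s, not_le.1 fun hsB => htK (hst ▸ ⟨s, ⟨hs, hsB⟩, rfl⟩), t, ⟨htI, htδ⟩, hst.symm⟩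
  obtain ⟨s₀, hs₀, h₀⟩ := hunb 0
  refine not_image_Ici_subset_closedBall hosc hεuv (F c) s₀ ?_
  calc φ '' Ici s₀ ⊆ F '' S := image_Ici_subset_of_unbounded hX hφc hφi hS hFc.continuousOn
        (hFi.mono inter_subset_left) hunb hs₀.le h₀
    _ ⊆ Metric.ball (F c) ε := image_subset_iff.2 fun t ht => hδε ht.2
    _ ⊆ Metric.closedBall (F c) ε := Metric.ball_subset_closedBall

theorem isArcClosed_range (hX : UniquelyArcwiseConnected X)
    {ψ : ℝ → X} (hψc : Continuous ψ) (hψi : Function.Injective ψ) {u v u' v' : X}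
    (huv : u ≠ v)
    (hosc : ∀ n : ℕ, u ∈ closure (ψ '' Iic (-(n : ℝ))) ∧ v ∈ closure (ψ '' Iic (-(n : ℝ))))
    (huv' : u' ≠ v')
    (hosc' : ∀ n : ℕ, u' ∈ closure (ψ '' Ici (n : ℝ)) ∧ v' ∈ closure (ψ '' Ici (n : ℝ))) :
    IsArcClosed (range ψ) := by
  have himg : ∀ a, (ψ ∘ Neg.neg) '' Ici a = ψ '' Iic (-a) := fun a => by
    rw [image_comp, image_neg_Ici]
  have hrange : range ψ = (ψ ∘ Neg.neg) '' Ici 0 ∪ ψ '' Ici 0 := by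
    rw [himg, neg_zero, ← image_union, Iic_union_Ici, image_univ]
  rw [hrange]
  exact (isArcClosed_image_Ici hX (hψc.comp continuous_neg).continuousOn
    (hψi.comp neg_injective).injOn huv fun n => himg n ▸ hosc n).union
    (isArcClosed_image_Ici hX hψc.continuousOn hψi.injOn huv' hosc')

end Rays

theorem quasiRetraction_wellDefined_general
    {X : Type*} [MetricSpace X]
    (hX : UniquelyArcwiseConnected X) (Y : Set X)
    (hY : IsTree Y ∨ IsOscillatoryRaySet Y ∨ IsBiOscillatoryLineSet Y) :
    ∀ x : X, ∃! y : X, QuasiRetractPt Y x y := by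
  suffices h : Y.Nonempty ∧ IsArcClosed Y ∧ IsArcConnected Y from
    existsUnique_quasiRetractPt hX h.1 h.2.1 h.2.2
  rcases hY with ⟨⟨hne, hcpt, -, -, -, hYuac⟩, -⟩ | ⟨φ, hφc, hφi, rfl, u, v, huv, hosc⟩ |
    ⟨ψ, hψc, hψi, rfl, ⟨u, v, huv, hosc⟩, ⟨u', v', huv', hosc'⟩⟩
  · exact ⟨nonempty_subtype.1 hne, (isCompact_iff_compactSpace.2 hcpt).isClosed.isArcClosed,
      isArcConnected_of_uniquelyArcwiseConnected hYuac⟩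
  · exact ⟨nonempty_Ici.image φ, isArcClosed_image_Ici hX hφc hφi huv hosc,
      isArcConnected_image ordConnected_Ici hφc hφi⟩
  · refine ⟨range_nonempty ψ, isArcClosed_range hX hψc hψi huv hosc huv' hosc', ?_⟩
    rw [← image_univ]
    exact isArcConnected_image ordConnected_univ hψc.continuousOn hψi.injOn

/-- **Section 2.4.** Let `X` be a uniquely arcwise connected continuum and `Y ⊆ X` a
tree, the image of an oscillatory ray, or the image of a bi-sided-oscillatory line.
Then every `x ∈ X` has a unique quasi-retraction point `y ∈ Y` with `[x,y] ∩ Y = {y}`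
(and `y = x` for `x ∈ Y`); so the quasi-retraction `r_Y : X → Y` is well defined. -/
theorem quasiRetraction_wellDefined
    {X : Type*} [MetricSpace X] [CompactSpace X] [ConnectedSpace X] [Nonempty X]
    (hX : UniquelyArcwiseConnected X) (Y : Set X)
    (hY : IsTree Y ∨ IsOscillatoryRaySet Y ∨ IsBiOscillatoryLineSet Y) :
    ∀ x : X, ∃! y : X, QuasiRetractPt Y x y :=
  quasiRetraction_wellDefined_general hX Y hY
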